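/- arXiv:2207.01037 — 3 statements merged into one kernel-verified Lean document; each statement's English description precedes it below -/
import Mathlib

section
/- Define a(n) = ζ(2n+2) for n ≥ 0. Then the sequence a satisfies the quadratic recurrence (2n+5)(n+1)·a(n+1) − 2·∑_{k=0}^{n} [2(k+1)·a(k+1)·a(n−1−k) + a(k)·a(n−k)] = 0 for all n ≥ 0, with the convention a(m) = 0 for m < 0. -/
open Finset PowerSeries

local notation "B" => bernoulliPowerSeries ℚ
local notation "E" => PowerSeries.exp ℚ

lemma psDerivExp : d⁄dX ℚ E = E := by
  ext n
  rw [PowerSeries.coeff_derivative, coeff_exp, coeff_exp]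
  simp only [Algebra.algebraMap_self, RingHom.id_apply]
  rw [Nat.factorial_succ]
  push_cast
  have : ((n:ℚ)+1) ≠ 0 := by positivity
  field_simp

lemma exp_sub_one_ne : (E - 1 : ℚ⟦X⟧) ≠ 0 := by
  intro h
  have := congrArg (coeff 1) h
  simp [coeff_exp, coeff_one] at this

lemma psHder : B * E + (E - 1) * d⁄dX ℚ B = 1 := by
  have h := congrArg (d⁄dX ℚ) (bernoulliPowerSeries_mul_exp_sub_one ℚ)
  rw [Derivation.leibniz, map_sub, psDerivExp, Derivation.map_one_eq_zero,
    PowerSeries.derivative_X, smul_eq_mul, smul_eq_mul] at h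
  linear_combination h

lemma psKey : B ^ 2 = (1 - X) * B - X * d⁄dX ℚ B := by
  have hE := bernoulliPowerSeries_mul_exp_sub_one ℚ
  have hd := psHder
  apply mul_right_cancel₀ (b := (E - 1) * (E - 1)) (mul_ne_zero exp_sub_one_ne exp_sub_one_ne)
  linear_combination (B*(E-1) + X - (1-X)*(E-1) - X*E) * hE + X*(E-1)*hd

lemma bern_conv (n : ℕ) :
    ∑ j ∈ range (n+2), ((n+1).choose j : ℚ) * bernoulli j * bernoulli (n+1-j)
      = (1 - ((n:ℚ)+1)) * bernoulli (n+1) - ((n:ℚ)+1) * bernoulli n := by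
  have h := congrArg (coeff (n+1)) psKey
  rw [sq, coeff_mul, Finset.Nat.sum_antidiagonal_eq_sum_range_succ_mk] at h
  rw [map_sub, sub_mul, one_mul, map_sub, coeff_succ_X_mul, coeff_succ_X_mul,
    PowerSeries.coeff_derivative] at h
  simp only [bernoulliPowerSeries, coeff_mk, Algebra.algebraMap_self, RingHom.id_apply] at h
  have hfac : ∀ m : ℕ, (m.factorial : ℚ) ≠ 0 := fun m => Nat.cast_ne_zero.2 m.factorial_ne_zero
  calc ∑ j ∈ range (n+2), ((n+1).choose j : ℚ) * bernoulli j * bernoulli (n+1-j)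
      = ∑ j ∈ range (n+2), ((n+1).factorial : ℚ) *
          (bernoulli j / j.factorial * (bernoulli (n+1-j) / (n+1-j).factorial)) := by
        refine Finset.sum_congr rfl fun j hj => ?_
        have hj' : j ≤ n+1 := Nat.lt_succ_iff.mp (Finset.mem_range.mp hj)
        have hc := Nat.choose_mul_factorial_mul_factorial hj'
        have hc' : (((n+1).choose j : ℚ)) * j.factorial * (n+1-j).factorial = (n+1).factorial := by
          exact_mod_cast congrArg (Nat.cast : ℕ → ℚ) hc
        field_simp
        linear_combination bernoulli j * bernoulli (n+1-j) * hc'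
    _ = ((n+1).factorial : ℚ) * (bernoulli (n+1) / (n+1).factorial - bernoulli n / n.factorial -
          bernoulli (n+1) / (n+1).factorial * ((n:ℚ)+1)) := by
        rw [← Finset.mul_sum]
        exact congrArg _ (by exact_mod_cast h)
    _ = (1 - ((n:ℚ)+1)) * bernoulli (n+1) - ((n:ℚ)+1) * bernoulli n := by
        have h1 : ((n+1).factorial : ℚ) = ((n:ℚ)+1) * n.factorial := by
          rw [Nat.factorial_succ]; push_cast; ring
        rw [h1]
        field_simp [h1]
        ring

lemma bern_odd_zero {j : ℕ} (hj : Odd j) (h1 : j ≠ 1) : bernoulli j = 0 := by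
  rw [bernoulli_eq_bernoulli'_of_ne_one h1]
  refine bernoulli'_eq_zero_of_odd hj ?_
  rcases hj with ⟨k, rfl⟩
  omega

lemma bern_even_conv (m : ℕ) :
    ∑ k ∈ range (m+1), ((2*m+4).choose (2*k+2) : ℚ) * bernoulli (2*k+2) * bernoulli (2*m+2-2*k)
      = -(2*(m:ℚ)+5) * bernoulli (2*m+4) := by
  have h := bern_conv (2*m+3)
  have hidx : 2*m+3+1 = 2*m+4 := by omega
  have hodd : bernoulli (2*m+3) = 0 := bern_odd_zero ⟨m+1, by omega⟩ (by omega)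
  rw [hidx, hodd] at h
  set f : ℕ → ℚ := fun j => ((2*m+4).choose j : ℚ) * bernoulli j * bernoulli (2*m+4-j) with hf
  have hsum : ∑ j ∈ range (2*m+3+2), f j = ∑ i ∈ range (m+3), f (2*i) := by
    rw [← Finset.sum_filter_add_sum_filter_not (range (2*m+3+2)) (fun j => Even j)]
    have h1 : ∑ j ∈ (range (2*m+3+2)).filter (fun j => ¬ Even j), f j = 0 := by
      refine Finset.sum_eq_zero fun j hj => ?_
      simp only [Finset.mem_filter, Finset.mem_range, Nat.not_even_iff_odd] at hj
      obtain ⟨hjlt, hjodd⟩ := hj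
      rcases eq_or_ne j 1 with rfl | hne
      · have e : 2*m+4-1 = 2*m+3 := rfl
        have : bernoulli (2*m+3) = 0 := bern_odd_zero ⟨m+1, by omega⟩ (by omega)
        simp [hf, e, this]
      · simp [hf, bern_odd_zero hjodd hne]
    have h2 : (range (2*m+3+2)).filter (fun j => Even j)
        = Finset.image (fun i => 2*i) (range (m+3)) := by
      ext j
      simp only [Finset.mem_filter, Finset.mem_range, Finset.mem_image]
      constructor
      · rintro ⟨hjlt, k, rfl⟩
        exact ⟨k, by omega, by ring⟩
      · rintro ⟨k, hk, rfl⟩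
        exact ⟨by omega, ⟨k, by ring⟩⟩
    rw [h1, add_zero, h2, Finset.sum_image (fun a _ b _ hab => by omega)]
  rw [hsum, Finset.sum_range_succ, Finset.sum_range_succ'] at h
  have hf0 : f 0 = bernoulli (2*m+4) := by simp [hf]
  have hflast : f (2*(m+2)) = bernoulli (2*m+4) := by
    have : 2*m+4-(2*(m+2)) = 0 := by omega
    simp [hf, this, show 2*(m+2) = 2*m+4 by omega]
  rw [hf0, hflast] at h
  have hcongr : ∑ i ∈ range (m+1), f (2*(i+1))
      = ∑ k ∈ range (m+1), ((2*m+4).choose (2*k+2) : ℚ) * bernoulli (2*k+2) * bernoulli (2*m+2-2*k) := by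
    refine Finset.sum_congr rfl fun i _ => ?_
    have e1 : 2*(i+1) = 2*i+2 := by ring
    have e2 : 2*m+4-(2*i+2) = 2*m+2-2*i := by omega
    simp only [hf, e1, e2]
  rw [hcongr] at h
  push_cast at h
  linear_combination h

open Real in
lemma zeta_prod (i j : ℕ) (hi : i ≠ 0) (hj : j ≠ 0) :
    riemannZeta (2*(i:ℂ)) * riemannZeta (2*(j:ℂ))
      = (-1)^(i+j) * 2^(2*(i+j)-2) * (π:ℂ)^(2*(i+j)) *
        ((bernoulli (2*i) * bernoulli (2*j) : ℚ) : ℂ) / ((2*i).factorial * (2*j).factorial) := by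
  have hi' : riemannZeta (2*(i:ℂ)) = (-1) ^ (i + 1) * (2 : ℂ) ^ (2 * i - 1)
      * (π : ℂ) ^ (2 * i) * bernoulli (2 * i) / (2 * i).factorial := by
    have := riemannZeta_two_mul_nat hi
    rw [show ((2:ℂ) * i) = ((2*i : ℕ) : ℂ) by push_cast; ring] at *
    exact this
  have hj' : riemannZeta (2*(j:ℂ)) = (-1) ^ (j + 1) * (2 : ℂ) ^ (2 * j - 1)
      * (π : ℂ) ^ (2 * j) * bernoulli (2 * j) / (2 * j).factorial := by
    have := riemannZeta_two_mul_nat hj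
    rw [show ((2:ℂ) * j) = ((2*j : ℕ) : ℂ) by push_cast; ring] at *
    exact this
  rw [hi', hj']
  have h2 : (2:ℂ)^(2*i-1) * 2^(2*j-1) = 2^(2*(i+j)-2) := by
    rw [← pow_add]; congr 1; omega
  have hs : ((-1:ℂ))^(i+1) * (-1)^(j+1) = (-1)^(i+j) := by
    rw [← pow_add, show i+1+(j+1) = (i+j)+2 by ring, pow_add]; ring
  have hp : ((π:ℂ))^(2*i) * (π:ℂ)^(2*j) = (π:ℂ)^(2*(i+j)) := by
    rw [← pow_add]; congr 1; ring
  rw [show ((-1:ℂ) ^ (i + 1) * (2 : ℂ) ^ (2 * i - 1) * (π : ℂ) ^ (2 * i) * bernoulli (2 * i) / (2 * i).factorial) *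
      ((-1:ℂ) ^ (j + 1) * (2 : ℂ) ^ (2 * j - 1) * (π : ℂ) ^ (2 * j) * bernoulli (2 * j) / (2 * j).factorial)
      = ((-1:ℂ)^(i+1) * (-1)^(j+1)) * ((2:ℂ)^(2*i-1) * 2^(2*j-1)) * ((π:ℂ)^(2*i) * (π:ℂ)^(2*j)) *
        ((bernoulli (2*i) : ℂ) * (bernoulli (2*j) : ℂ)) / ((((2*i).factorial : ℂ)) * ((2*j).factorial : ℂ)) from by ring,
    h2, hs, hp]
  push_cast
  ring

open Real in
lemma zeta_even_sum (m : ℕ) :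
    ∑ k ∈ range (m+1), riemannZeta (2*((k+1 : ℕ):ℂ)) * riemannZeta (2*((m+1-k : ℕ):ℂ))
      = ((m:ℂ) + 5/2) * riemannZeta (2*((m+2 : ℕ):ℂ)) := by
  have hF : ∀ r : ℕ, ((r.factorial : ℂ)) ≠ 0 := fun r => Nat.cast_ne_zero.2 r.factorial_ne_zero
  have step1 : ∑ k ∈ range (m+1), riemannZeta (2*((k+1 : ℕ):ℂ)) * riemannZeta (2*((m+1-k : ℕ):ℂ))
      = ∑ k ∈ range (m+1), ((-1:ℂ)^m * 2^(2*m+2) * (π:ℂ)^(2*m+4) / ((2*m+4).factorial)) *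
          ((((2*m+4).choose (2*k+2) : ℚ) * bernoulli (2*k+2) * bernoulli (2*m+2-2*k) : ℚ) : ℂ) := by
    refine Finset.sum_congr rfl fun k hk => ?_
    have hkm : k ≤ m := Nat.lt_succ_iff.mp (Finset.mem_range.mp hk)
    rw [zeta_prod (k+1) (m+1-k) (by omega) (by omega)]
    have e1 : (k+1)+(m+1-k) = m+2 := by omega
    have e2 : 2*(k+1) = 2*k+2 := by ring
    have e3 : 2*(m+1-k) = 2*m+2-2*k := by omega
    have e4 : 2*(m+2)-2 = 2*m+2 := by omega
    have e5 : 2*(m+2) = 2*m+4 := by ring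
    rw [e1, e2, e3, e4, e5]
    have hcn := Nat.choose_mul_factorial_mul_factorial (show 2*k+2 ≤ 2*m+4 by omega)
    rw [show 2*m+4-(2*k+2) = 2*m+2-2*k from by omega] at hcn
    have hc : (((2*m+4).choose (2*k+2) : ℂ)) * (2*k+2).factorial * (2*m+2-2*k).factorial
        = ((2*m+4).factorial : ℂ) := by exact_mod_cast congrArg (Nat.cast (R:=ℂ)) hcn
    rw [div_mul_eq_mul_div, div_eq_div_iff (mul_ne_zero (hF _) (hF _)) (hF _)]
    push_cast
    rw [pow_add]
    linear_combination (-((-1:ℂ)^m * 2^(2*m+2) * (π:ℂ)^(2*m+4) *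
      (bernoulli (2*k+2) : ℂ) * (bernoulli (2*m+2-2*k) : ℂ))) * hc
  rw [step1, ← Finset.mul_sum, ← Rat.cast_sum, bern_even_conv]
  have hz : riemannZeta (2*((m+2 : ℕ):ℂ)) = (-1) ^ (m+2 + 1) * (2 : ℂ) ^ (2 * (m+2) - 1)
      * (π : ℂ) ^ (2 * (m+2)) * bernoulli (2 * (m+2)) / (2 * (m+2)).factorial := by
    have := riemannZeta_two_mul_nat (k := m+2) (by omega)
    rw [show ((2:ℂ) * ((m+2:ℕ):ℂ)) = ((2*(m+2) : ℕ) : ℂ) by push_cast; ring] at *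
    exact this
  rw [hz, show 2*(m+2)-1 = 2*m+3 from by omega, show 2*(m+2) = 2*m+4 from by omega]
  push_cast
  rw [pow_add, pow_add, show 2*m+3 = (2*m+2)+1 from by omega, pow_add]
  field_simp
  ring

noncomputable def zc (j : ℕ) : ℂ := riemannZeta (2*(j:ℂ))

lemma zeta_even_sum' (m : ℕ) :
    ∑ k ∈ range (m+1), zc (k+1) * zc (m+1-k) = ((m:ℂ) + 5/2) * zc (m+2) := by
  simpa [zc] using zeta_even_sum m


theorem zeta_even_quadratic_recurrence (a : ℤ → ℂ)
    (hneg : ∀ m : ℤ, m < 0 → a m = 0)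
    (hval : ∀ m : ℕ, a m = riemannZeta (2 * m + 2)) :
    ∀ n : ℕ,
      ((2 * n + 5 : ℂ)) * ((n : ℂ) + 1) * a ((n : ℤ) + 1) -
        2 * ∑ k ∈ range (n + 1),
          (2 * ((k : ℂ) + 1) * a ((k : ℤ) + 1) * a ((n : ℤ) - 1 - k) +
            a (k : ℤ) * a ((n : ℤ) - k)) = 0 := by
  intro n
  have ha : ∀ m : ℕ, a (m:ℤ) = zc (m+1) := by
    intro m
    rw [hval m, zc]
    congr 1
    push_cast
    ring
  set S : ℂ := ∑ k ∈ range (n+1), zc (k+1) * zc (n+1-k) with hSdef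
  set W : ℂ := ∑ k ∈ range (n+1), ((k:ℂ)+1) * zc (k+1) * zc (n+1-k) with hWdef
  have hS : ∑ k ∈ range (n+1), a (k:ℤ) * a ((n:ℤ)-k) = S := by
    refine Finset.sum_congr rfl fun k hk => ?_
    have hk' : k ≤ n := Nat.lt_succ_iff.mp (Finset.mem_range.mp hk)
    have h1 : ((n:ℤ) - k) = ((n-k : ℕ) : ℤ) := by omega
    rw [h1, ha, ha]
    congr 2
    omega
  have hT : ∑ k ∈ range (n+1), 2*((k:ℂ)+1) * a ((k:ℤ)+1) * a ((n:ℤ)-1-k)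
      = ∑ k ∈ range n, 2*((k:ℂ)+1) * zc (k+2) * zc (n-k) := by
    rw [Finset.sum_range_succ, hneg ((n:ℤ)-1-n) (by omega), mul_zero, add_zero]
    refine Finset.sum_congr rfl fun k hk => ?_
    have hk' : k < n := Finset.mem_range.mp hk
    have h1 : ((n:ℤ)-1-k) = ((n-1-k : ℕ):ℤ) := by omega
    have h2 : ((k:ℤ)+1) = ((k+1:ℕ):ℤ) := by omega
    rw [h1, h2, ha, ha]
    congr 2
    omega
  have hW : 2 * W = ((n:ℂ)+2) * S := by
    have hrefl := Finset.sum_range_reflect (fun k => ((k:ℂ)+1) * zc (k+1) * zc (n+1-k)) (n+1)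
    calc 2 * W = W + ∑ k ∈ range (n+1), ((((n+1-1-k : ℕ)):ℂ)+1) * zc ((n+1-1-k)+1) * zc (n+1-(n+1-1-k)) := by
          rw [hrefl]; ring
      _ = ∑ k ∈ range (n+1), (((k:ℂ)+1) * zc (k+1) * zc (n+1-k)
            + ((((n+1-1-k : ℕ)):ℂ)+1) * zc ((n+1-1-k)+1) * zc (n+1-(n+1-1-k))) := by
          rw [hWdef, ← Finset.sum_add_distrib]
      _ = ∑ k ∈ range (n+1), ((n:ℂ)+2) * (zc (k+1) * zc (n+1-k)) := by
          refine Finset.sum_congr rfl fun k hk => ?_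
          have hk' : k ≤ n := Nat.lt_succ_iff.mp (Finset.mem_range.mp hk)
          have e1 : n+1-1-k = n-k := by omega
          have e2 : (n-k)+1 = n+1-k := by omega
          have e3 : n+1-(n-k) = k+1 := by omega
          have e4 : ((n-k : ℕ):ℂ) = (n:ℂ) - (k:ℂ) := by
            push_cast [Nat.cast_sub hk']; ring
          rw [e1, e2, e3, e4]
          ring
      _ = ((n:ℂ)+2) * S := by rw [hSdef, ← Finset.mul_sum]
  have hTW : ∑ k ∈ range n, 2*((k:ℂ)+1) * zc (k+2) * zc (n-k) = 2 * (W - S) := by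
    have hW' : W = ∑ k ∈ range n, (((k+1:ℕ):ℂ)+1) * zc ((k+1)+1) * zc (n+1-(k+1)) + (((0:ℕ):ℂ)+1) * zc (0+1) * zc (n+1-0) :=
      Finset.sum_range_succ' _ n
    have hS' : S = ∑ k ∈ range n, zc ((k+1)+1) * zc (n+1-(k+1)) + zc (0+1) * zc (n+1-0) :=
      Finset.sum_range_succ' _ n
    have hAB : ∑ k ∈ range n, 2*((k:ℂ)+1) * zc (k+2) * zc (n-k)
        = 2*(∑ k ∈ range n, (((k+1:ℕ):ℂ)+1) * zc ((k+1)+1) * zc (n+1-(k+1)))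
          - 2*(∑ k ∈ range n, zc ((k+1)+1) * zc (n+1-(k+1))) := by
      rw [Finset.mul_sum, Finset.mul_sum, ← Finset.sum_sub_distrib]
      refine Finset.sum_congr rfl fun k hk => ?_
      rw [show k+1+1 = k+2 from by omega, show n+1-(k+1) = n-k from by omega]
      push_cast
      ring
    rw [hAB, hW', hS']
    ring
  have hZ : S = ((n:ℂ)+5/2) * zc (n+2) := by rw [hSdef]; exact zeta_even_sum' n
  rw [show ((n:ℤ)+1) = ((n+1:ℕ):ℤ) from by omega, ha, show n+1+1 = n+2 from by omega,
    Finset.sum_add_distrib, hT, hTW, hS]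
  linear_combination (-2 : ℂ)*hW + (-(2*(n:ℂ)+2))*hZ
end

section
/- The generating function f(z) = ∑_{n=0}^{∞} ζ(2n+2) z^n (valid for |z| < 1) satisfies 2z·f''(z) + 5f'(z) − 4z·f(z)·f'(z) − 2·f(z)² = 0 for |z| < 1. -/
open PowerSeries Finset Real FormalMultilinearSeries

noncomputable def pSum (c : ℕ → ℂ) (z : ℂ) : ℂ := ∑' n : ℕ, c n * z ^ n

lemma deriv_exp_ps : d⁄dX ℚ (exp ℚ) = exp ℚ := by
  ext n
  rw [coeff_derivative, coeff_exp, coeff_exp]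
  simp only [Algebra.algebraMap_self, RingHom.id_apply]
  field_simp [Nat.factorial_succ]
  rw [Nat.factorial_succ]; push_cast; ring

lemma bps_quadratic :
    bernoulliPowerSeries ℚ * bernoulliPowerSeries ℚ =
      bernoulliPowerSeries ℚ - X * bernoulliPowerSeries ℚ
        - X * d⁄dX ℚ (bernoulliPowerSeries ℚ) := by
  set B := bernoulliPowerSeries ℚ with hB
  have key : B * (exp ℚ - 1) = X := bernoulliPowerSeries_mul_exp_sub_one ℚ
  have hd : d⁄dX ℚ (B * (exp ℚ - 1)) = 1 := by rw [key, derivative_X]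
  rw [Derivation.leibniz] at hd
  simp only [smul_eq_mul, map_sub, deriv_exp_ps, Derivation.map_one_eq_zero, sub_zero] at hd
  -- hd : B * exp ℚ + (exp ℚ - 1) * d⁄dX ℚ B = 1
  have h2 := congrArg (· * B) hd
  simp only [add_mul, one_mul] at h2
  -- rearrange
  have e1 : B * exp ℚ * B = B * B * (exp ℚ - 1) + B * B := by ring
  have e2 : (exp ℚ - 1) * d⁄dX ℚ B * B = d⁄dX ℚ B * (B * (exp ℚ - 1)) := by ring
  rw [e1, e2, key] at h2
  have e3 : B * B * (exp ℚ - 1) = X * B := by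
    rw [mul_assoc, key]; ring
  rw [e3] at h2
  linear_combination h2

noncomputable def qB (n : ℕ) : ℚ := bernoulli n / (n.factorial : ℚ)

lemma coeff_bps (n : ℕ) : coeff n (bernoulliPowerSeries ℚ) = qB n := by
  simp [bernoulliPowerSeries, qB]

lemma sum_even_of_odd_vanish {M : Type*} [AddCommMonoid M] (h : ℕ → M)
    (hodd : ∀ j, Odd j → h j = 0) (m : ℕ) :
    ∑ j ∈ range (2*m+1), h j = ∑ k ∈ range (m+1), h (2*k) := by
  induction m with
  | zero => simp
  | succ m ih =>
      have e : 2*(m+1)+1 = (2*m+1) + 1 + 1 := by ring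
      rw [e, sum_range_succ, sum_range_succ _ (2*m+1), ih,
        hodd (2*m+1) ⟨m, by ring⟩, add_zero, sum_range_succ _ (m+1)]
      have : 2*(m+1) = 2*m+2 := by ring
      rw [this]

lemma qB_zero : qB 0 = 1 := by simp [qB]

lemma qB_odd {n : ℕ} (h : Odd n) (h1 : 1 < n) : qB n = 0 := by
  rw [qB, bernoulli_eq_bernoulli'_of_ne_one (by omega),
    bernoulli'_eq_zero_of_odd h h1]
  simp


lemma qB_rec (n : ℕ) :
    ∑ k ∈ range (n+1), qB (2*k+2) * qB (2*(n-k)+2) = -(2*n+5) * qB (2*n+4) := by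
  have h := congrArg (PowerSeries.coeff (2*n+4)) bps_quadratic
  rw [coeff_mul, Finset.Nat.sum_antidiagonal_eq_sum_range_succ_mk] at h
  simp only [map_sub] at h
  have e4 : 2*n+4 = (2*n+3)+1 := by ring
  rw [e4, coeff_succ_X_mul, coeff_succ_X_mul, coeff_derivative, ← e4] at h
  simp only [coeff_bps] at h
  have hodd3 : qB (2*n+3) = 0 := qB_odd ⟨n+1, by ring⟩ (by omega)
  rw [hodd3] at h
  have hsplit : ∑ i ∈ range (2*n+4+1), qB i * qB (2*n+4-i)
      = ∑ k ∈ range (n+2+1), qB (2*k) * qB (2*n+4-2*k) := by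
    have := sum_even_of_odd_vanish (fun i => qB i * qB (2*n+4-i)) ?_ (n+2)
    · rw [show 2*n+4+1 = 2*(n+2)+1 by ring]; exact this
    · intro j hj
      rcases Nat.lt_or_ge j 2 with h2 | h2
      · interval_cases j
        · exact absurd hj (by decide)
        · rw [show 2*n+4-1 = 2*n+3 by omega, hodd3, mul_zero]
      · rw [qB_odd hj (by omega), zero_mul]
  rw [show (2*n+4).succ = 2*n+4+1 from rfl, hsplit, sum_range_succ,
    sum_range_succ'] at h
  have hterm : ∀ k ∈ range (n+1), qB (2*(k+1)) * qB (2*n+4-2*(k+1))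
      = qB (2*k+2) * qB (2*(n-k)+2) := by
    intro k hk
    simp only [mem_range] at hk
    congr 2 <;> omega
  rw [Finset.sum_congr rfl hterm, show 2*n+4-2*(n+2) = 0 by omega,
    show (2:ℕ)*0 = 0 from rfl, show 2*n+4-0 = 2*n+4 by omega,
    show 2*(n+2) = 2*n+4 by ring, qB_zero] at h
  push_cast at h ⊢
  linarith [h]

noncomputable def aZ (m : ℕ) : ℂ := riemannZeta (2*(m:ℂ)+2)

lemma aZ_eq (m : ℕ) :
    aZ m = (-1)^m * 2^(2*m+1) * (π:ℂ)^(2*m+2) * (qB (2*m+2) : ℂ) := by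
  have h := riemannZeta_two_mul_nat (k := m+1) (Nat.succ_ne_zero m)
  have harg : (2*((m+1:ℕ):ℂ)) = 2*(m:ℂ)+2 := by push_cast; ring
  rw [harg] at h
  rw [aZ, h, qB]
  have h1 : 2*(m+1)-1 = 2*m+1 := by omega
  have h2 : 2*(m+1) = 2*m+2 := by ring
  rw [h1, h2]
  push_cast
  ring

lemma euler_zeta (n : ℕ) :
    2 * ∑ k ∈ range (n+1), aZ k * aZ (n-k) = (2*(n:ℂ)+5) * aZ (n+1) := by
  have hterm : ∀ k ∈ range (n+1), aZ k * aZ (n-k)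
      = (-1)^n * 2^(2*n+2) * (π:ℂ)^(2*n+4) *
        ((qB (2*k+2) : ℂ) * (qB (2*(n-k)+2) : ℂ)) := by
    intro k hk
    simp only [mem_range] at hk
    obtain ⟨j, rfl⟩ : ∃ j, n = k + j := ⟨n - k, by omega⟩
    rw [Nat.add_sub_cancel_left, aZ_eq, aZ_eq]
    push_cast
    ring
  rw [Finset.sum_congr rfl hterm, ← Finset.mul_sum]
  have hc := congrArg (fun q : ℚ => (q : ℂ)) (qB_rec n)
  push_cast at hc
  rw [hc, aZ_eq]
  push_cast
  rw [show 2*(n+1)+1 = 2*n+3 by ring, show 2*(n+1)+2 = 2*n+4 by ring,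
    show (2:ℂ)^(2*n+3) = 2^(2*n+2)*2 by rw [pow_succ],
    show (-1:ℂ)^(n+1) = (-1)^n * (-1) by rw [pow_succ]]
  ring

-- summability under quadratic-growth bound
lemma summable_norm_coeff {c : ℕ → ℂ} {C : ℝ} (hC : ∀ n, ‖c n‖ ≤ C * (n+1)^2)
    {r : ℝ} (hr0 : 0 ≤ r) (hr : r < 1) :
    Summable fun n => ‖c n‖ * r ^ n := by
  have hsum : Summable fun n : ℕ => C * ((n:ℝ)^2 * r^n + (2*n) * r^n + 1 * r^n) := by
    apply Summable.mul_left
    apply Summable.add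
    apply Summable.add
    · simpa using summable_pow_mul_geometric_of_norm_lt_one (R := ℝ) 2
        (by rwa [Real.norm_eq_abs, abs_of_nonneg hr0])
    · simpa [mul_assoc] using (summable_pow_mul_geometric_of_norm_lt_one (R := ℝ) 1
        (by rwa [Real.norm_eq_abs, abs_of_nonneg hr0])).mul_left 2
    · simpa using summable_geometric_of_lt_one hr0 hr
  refine hsum.of_nonneg_of_le (fun n => by positivity) (fun n => ?_)
  calc ‖c n‖ * r ^ n ≤ (C * (n+1)^2) * r ^ n := by
        apply mul_le_mul_of_nonneg_right (hC n) (by positivity)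
    _ = C * ((n:ℝ)^2 * r^n + (2*n) * r^n + 1 * r^n) := by ring

lemma summable_norm_term {c : ℕ → ℂ} {C : ℝ} (hC : ∀ n, ‖c n‖ ≤ C * (n+1)^2)
    {z : ℂ} (hz : ‖z‖ < 1) : Summable fun n => ‖c n * z ^ n‖ := by
  simpa [norm_mul, norm_pow] using summable_norm_coeff hC (norm_nonneg z) hz

lemma hasSum_S {c : ℕ → ℂ} {C : ℝ} (hC : ∀ n, ‖c n‖ ≤ C * (n+1)^2)
    {z : ℂ} (hz : ‖z‖ < 1) : HasSum (fun n => c n * z ^ n) (pSum c z) :=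
  ((summable_norm_term hC hz).of_norm).hasSum

lemma radius_ge_one {c : ℕ → ℂ} {C : ℝ} (hC : ∀ n, ‖c n‖ ≤ C * (n+1)^2) :
    1 ≤ (ofScalars ℂ c).radius := by
  refine ENNReal.le_of_forall_nnreal_lt (fun r hr => ?_)
  apply FormalMultilinearSeries.le_radius_of_summable_norm
  have hr1 : (r : ℝ) < 1 := by exact_mod_cast hr
  simp only [ofScalars_norm]
  exact summable_norm_coeff hC r.coe_nonneg hr1

lemma hasFPS {c : ℕ → ℂ} {C : ℝ} (hC : ∀ n, ‖c n‖ ≤ C * (n+1)^2) :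
    HasFPowerSeriesOnBall (pSum c) (ofScalars ℂ c) 0 1 := by
  have h0 : 0 < (ofScalars ℂ c).radius := lt_of_lt_of_le one_pos (radius_ge_one hC)
  have h := ((ofScalars ℂ c).hasFPowerSeriesOnBall h0).mono one_pos (radius_ge_one hC)
  convert h using 1
  funext z
  rw [pSum]
  simp only [FormalMultilinearSeries.sum, ofScalars_apply_eq, smul_eq_mul]

lemma ofScalars_coeff (c : ℕ → ℂ) (n : ℕ) : (ofScalars ℂ c).coeff n = c n := by
  have := ofScalars_apply_eq (E := ℂ) c 1 n
  simp only [one_pow, smul_eq_mul, mul_one] at this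
  exact this

lemma mem_ball_one {z : ℂ} (hz : ‖z‖ < 1) : z ∈ Metric.eball (0:ℂ) 1 := by
  rw [Metric.mem_eball, edist_zero_right, enorm_eq_nnnorm]
  exact_mod_cast (by exact_mod_cast hz : ‖z‖₊ < 1)

lemma deriv_S {c c' : ℕ → ℂ} {C C' : ℝ}
    (hC : ∀ n, ‖c n‖ ≤ C * (n+1)^2) (hC' : ∀ n, ‖c' n‖ ≤ C' * (n+1)^2)
    (hcc' : ∀ n, c' n = ((n:ℂ)+1) * c (n+1))
    {g : ℂ → ℂ} (hg : HasFPowerSeriesOnBall g (ofScalars ℂ c) 0 1)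
    {z : ℂ} (hz : ‖z‖ < 1) : HasDerivAt g (pSum c' z) z := by
  have hda : DifferentiableAt ℂ g z :=
    ((hg.analyticAt_of_mem (mem_ball_one hz)).differentiableAt)
  have key : z * deriv g z = z * pSum c' z := by
    have hfd := hg.fderiv.hasSum (x := 0) (mem_ball_one hz)
    rw [zero_add] at hfd
    have happ := hfd.mapL (ContinuousLinearMap.apply ℂ ℂ z)
    have heq : (fun n => (ContinuousLinearMap.apply ℂ ℂ z)
        ((ofScalars ℂ c).derivSeries n (fun _ => z)))
        = fun n => z * (c' n * z ^ n) := by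
      funext n
      rw [ContinuousLinearMap.apply_apply, derivSeries_apply_diag, ofScalars_apply_eq,
        hcc']
      push_cast [nsmul_eq_mul, smul_eq_mul]
      ring
    rw [heq] at happ
    have hT := (hasSum_S hC' hz).mul_left z
    have h2 : z * pSum c' z = (ContinuousLinearMap.apply ℂ ℂ z) (fderiv ℂ g z) :=
      hT.unique happ
    rw [h2, ContinuousLinearMap.apply_apply]
    have : fderiv ℂ g z z = z • fderiv ℂ g z 1 := by
      rw [← ContinuousLinearMap.map_smul, smul_eq_mul, mul_one]
    rw [this, smul_eq_mul, ← deriv]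
  rcases eq_or_ne z 0 with rfl | hz0
  · have hd0 : deriv g 0 = c 1 := by
      rw [hg.hasFPowerSeriesAt.deriv]
      exact ofScalars_coeff c 1
    have hS0 : pSum c' 0 = c 1 := by
      rw [pSum]
      rw [tsum_eq_single 0 (fun n hn => by simp [zero_pow hn])]
      simp [hcc' 0]
    rw [hS0, ← hd0]
    exact hda.hasDerivAt
  · have := mul_left_cancel₀ hz0 key
    rw [← this]
    exact hda.hasDerivAt

lemma aZ_bound (m : ℕ) : ‖aZ m‖ ≤ 2 := by
  have harg : (2*(m:ℂ)+2) = ((2*m+2 : ℕ) : ℂ) := by push_cast; ring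
  rw [aZ, harg, zeta_nat_eq_tsum_of_gt_one (by omega)]
  have hsumm : ∀ p : ℕ, 2 ≤ p → Summable (fun n : ℕ => 1 / (n:ℝ)^p) := by
    intro p hp
    exact Real.summable_one_div_nat_pow.mpr (by omega)
  have hnorm : ∀ (n : ℕ) (p : ℕ), ‖1 / (n:ℂ)^p‖ = 1 / (n:ℝ)^p := by
    intro n p
    rw [norm_div, norm_pow, norm_one, Complex.norm_natCast]
  have hsummC : Summable (fun n : ℕ => ‖1 / (n:ℂ)^(2*m+2)‖) := by
    simp_rw [hnorm]; exact hsumm _ (by omega)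
  refine (norm_tsum_le_tsum_norm hsummC).trans ?_
  have hle : ∀ n : ℕ, ‖1 / (n:ℂ)^(2*m+2)‖ ≤ 1 / (n:ℝ)^2 := by
    intro n
    rw [hnorm]
    rcases Nat.eq_zero_or_pos n with rfl | hn
    · simp
    · apply one_div_le_one_div_of_le (by positivity)
      apply pow_le_pow_right₀ (by exact_mod_cast hn) (by omega)
  refine (Summable.tsum_le_tsum hle hsummC ?_).trans ?_
  · exact hsumm 2 le_rfl
  · have := hasSum_zeta_two.tsum_eq
    simp only [this]
    nlinarith [pi_lt_d2, pi_gt_three]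

lemma reflect2 (m : ℕ) :
    2 * ∑ k ∈ range (m+1), (((m-k:ℕ):ℂ)+1) * (aZ k * aZ (m-k+1))
      = ((m:ℂ)+1) * ∑ j ∈ range (m+2), aZ j * aZ (m+1-j) := by
  set h : ℕ → ℂ := fun j => aZ j * aZ (m+1-j) with hh
  have step1 : ∑ j ∈ range (m+2), ((m+1-j:ℕ):ℂ) * h j
      = ∑ k ∈ range (m+1), (((m-k:ℕ):ℂ)+1) * (aZ k * aZ (m-k+1)) := by
    rw [sum_range_succ, show m+1-(m+1) = 0 by omega]
    push_cast
    rw [zero_mul, add_zero]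
    refine Finset.sum_congr rfl (fun k hk => ?_)
    simp only [mem_range] at hk
    rw [hh]
    dsimp only
    rw [show m+1-k = (m-k)+1 by omega]
    push_cast
    ring
  have step2 : ∑ j ∈ range (m+2), ((m+1-j:ℕ):ℂ) * h j
      = ∑ j ∈ range (m+2), (j:ℂ) * h j := by
    have hr := Finset.sum_range_reflect (fun j => ((m+1-j:ℕ):ℂ) * h j) (m+2)
    rw [← hr]
    refine Finset.sum_congr rfl (fun j hj => ?_)
    simp only [mem_range] at hj
    rw [show m+2-1-j = m+1-j by omega, show m+1-(m+1-j) = j by omega, hh]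
    dsimp only
    rw [show m+1-(m+1-j) = j by omega]
    ring
  calc 2 * ∑ k ∈ range (m+1), (((m-k:ℕ):ℂ)+1) * (aZ k * aZ (m-k+1))
      = ∑ j ∈ range (m+2), ((m+1-j:ℕ):ℂ) * h j
        + ∑ j ∈ range (m+2), (j:ℂ) * h j := by rw [← step1, step2]; ring
    _ = ∑ j ∈ range (m+2), (((m+1-j:ℕ):ℂ) + (j:ℂ)) * h j := by
        rw [← Finset.sum_add_distrib]
        exact Finset.sum_congr rfl (fun j hj => by ring)
    _ = ∑ j ∈ range (m+2), ((m:ℂ)+1) * h j := by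
        refine Finset.sum_congr rfl (fun j hj => ?_)
        simp only [mem_range] at hj
        rw [Nat.cast_sub (by omega : j ≤ m+1)]
        push_cast
        ring
    _ = ((m:ℂ)+1) * ∑ j ∈ range (m+2), h j := by rw [Finset.mul_sum]

lemma key_coeff (m : ℕ) :
    4 * ∑ k ∈ range (m+1), (((m-k:ℕ):ℂ)+1) * (aZ k * aZ (m-k+1))
      + 2 * ∑ j ∈ range (m+2), aZ j * aZ (m+1-j)
    = ((m:ℂ)+2) * (2*(m:ℂ)+7) * aZ (m+2) := by
  have hr := reflect2 m
  have he := euler_zeta (m+1)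
  push_cast at he
  linear_combination 2*hr + ((m:ℂ)+2)*he

theorem zeta_even_GF_quadratic_ODE (f : ℂ → ℂ)
    (hf : ∀ z : ℂ, f z = ∑' n : ℕ, riemannZeta (2 * n + 2) * z ^ n) :
    ∀ z : ℂ, ‖z‖ < 1 →
      2 * z * deriv (deriv f) z + 5 * deriv f z - 4 * z * f z * deriv f z -
        2 * (f z) ^ 2 = 0 := by
  intro z hz
  have hfS : f = pSum aZ := by
    funext w
    rw [hf w, pSum]
    exact tsum_congr fun n => by rw [aZ]
  set c1 : ℕ → ℂ := fun n => ((n:ℂ)+1) * aZ (n+1) with hc1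
  set c2 : ℕ → ℂ := fun n => ((n:ℂ)+1) * (((n:ℂ)+2) * aZ (n+2)) with hc2
  have hA : ∀ n : ℕ, ‖aZ n‖ ≤ (2:ℝ) * (n+1)^2 := by
    intro n
    refine (aZ_bound n).trans ?_
    have : (1:ℝ) ≤ ((n:ℝ)+1)^2 := by nlinarith [Nat.cast_nonneg (α := ℝ) n]
    nlinarith
  have hC1 : ∀ n : ℕ, ‖c1 n‖ ≤ (2:ℝ) * (n+1)^2 := by
    intro n
    rw [hc1]
    dsimp only
    rw [norm_mul]
    have h1 : ‖((n:ℂ)+1)‖ = (n:ℝ)+1 := by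
      rw [show ((n:ℂ)+1) = ((n+1:ℕ):ℂ) by push_cast; ring, Complex.norm_natCast]
      push_cast; ring
    rw [h1]
    have := aZ_bound (n+1)
    nlinarith [Nat.cast_nonneg (α := ℝ) n, norm_nonneg (aZ (n+1))]
  have hC2 : ∀ n : ℕ, ‖c2 n‖ ≤ (8:ℝ) * (n+1)^2 := by
    intro n
    rw [hc2]
    dsimp only
    rw [norm_mul, norm_mul]
    have h1 : ‖((n:ℂ)+1)‖ = (n:ℝ)+1 := by
      rw [show ((n:ℂ)+1) = ((n+1:ℕ):ℂ) by push_cast; ring, Complex.norm_natCast]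
      push_cast; ring
    have h2 : ‖((n:ℂ)+2)‖ = (n:ℝ)+2 := by
      rw [show ((n:ℂ)+2) = ((n+2:ℕ):ℂ) by push_cast; ring, Complex.norm_natCast]
      push_cast; ring
    rw [h1, h2]
    have := aZ_bound (n+2)
    nlinarith [Nat.cast_nonneg (α := ℝ) n, norm_nonneg (aZ (n+2))]
  have hFf : HasFPowerSeriesOnBall f (ofScalars ℂ aZ) 0 1 := by
    rw [hfS]; exact hasFPS hA
  have hcc1 : ∀ n : ℕ, c1 n = ((n:ℂ)+1) * aZ (n+1) := fun n => rfl
  have hcc2 : ∀ n : ℕ, c2 n = ((n:ℂ)+1) * c1 (n+1) := by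
    intro n
    rw [hc2, hc1]
    push_cast
    ring
  have hd1 : ∀ w : ℂ, ‖w‖ < 1 → deriv f w = pSum c1 w := fun w hw =>
    (deriv_S hA hC1 hcc1 hFf hw).deriv
  have hd2 : deriv (deriv f) z = pSum c2 z := by
    have hev : deriv f =ᶠ[nhds z] pSum c1 := by
      filter_upwards [Metric.isOpen_ball.mem_nhds
        (show z ∈ Metric.ball (0:ℂ) 1 by
          simpa [Metric.mem_ball, dist_zero_right] using hz)] with w hw
      exact hd1 w (by simpa [Metric.mem_ball, dist_zero_right] using hw)
    rw [hev.deriv_eq]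
    exact (deriv_S hC1 hC2 hcc2 (hasFPS hC1) hz).deriv
  rw [hd2, hd1 z hz, hfS]
  -- now pure power series identity
  set u : ℕ → ℂ := fun n => aZ n * z ^ n with hu
  set v : ℕ → ℂ := fun n => c1 n * z ^ n with hv
  have h2 : HasSum v (pSum c1 z) := hasSum_S hC1 hz
  have h3 : HasSum (fun n => c2 n * z ^ n) (pSum c2 z) := hasSum_S hC2 hz
  have su : Summable fun n => ‖u n‖ := summable_norm_term hA hz
  have sv : Summable fun n => ‖v n‖ := summable_norm_term hC1 hz
  have hFF : HasSum (fun n => ∑ k ∈ range (n+1), u k * u (n-k))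
      (pSum aZ z * pSum aZ z) := by
    have hs := (summable_norm_sum_mul_range_of_summable_norm su su).of_norm
    have ht := hs.hasSum
    rwa [← tsum_mul_tsum_eq_tsum_sum_range_of_summable_norm su su] at ht
  have hFG : HasSum (fun n => ∑ k ∈ range (n+1), u k * v (n-k))
      (pSum aZ z * pSum c1 z) := by
    have hs := (summable_norm_sum_mul_range_of_summable_norm su sv).of_norm
    have ht := hs.hasSum
    rwa [← tsum_mul_tsum_eq_tsum_sum_range_of_summable_norm su sv] at ht
  -- reindex 2z * H
  set w : ℕ → ℂ := fun n => 2*(n:ℂ)*((n:ℂ)+1)*aZ (n+1) * z^n with hw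
  have T1 : HasSum w (2*z*pSum c2 z) := by
    have base := h3.mul_left (2*z)
    have heq : (fun n => 2*z*(c2 n * z^n)) = fun n => w (n+1) := by
      funext n
      rw [hw, hc2]
      dsimp only
      push_cast
      ring
    rw [heq] at base
    have := (hasSum_nat_add_iff (f := w) 1).mp base
    simpa [hw] using this
  -- reindex 4z * F * G
  set q : ℕ → ℂ := fun n => n.casesOn 0 (fun m => 4*z*(∑ k ∈ range (m+1), u k * v (m-k)))
    with hq
  have T3 : HasSum q (4*z*(pSum aZ z * pSum c1 z)) := by
    have base := hFG.mul_left (4*z)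
    have heq : (fun n => 4*z*(∑ k ∈ range (n+1), u k * v (n-k))) = fun n => q (n+1) := rfl
    rw [heq] at base
    have := (hasSum_nat_add_iff (f := q) 1).mp base
    simpa [hq] using this
  have T2 : HasSum (fun n => 5 * v n) (5 * pSum c1 z) := h2.mul_left 5
  have T4 : HasSum (fun n => 2 * ∑ k ∈ range (n+1), u k * u (n-k))
      (2 * (pSum aZ z * pSum aZ z)) := hFF.mul_left 2
  have Total := (T1.add T2).sub (T3.add T4)
  have hzero : (fun n => (w n + 5 * v n) -
      (q n + 2 * ∑ k ∈ range (n+1), u k * u (n-k))) = fun _ => (0:ℂ) := by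
    funext n
    cases n with
    | zero =>
        have hq0 : q 0 = 0 := rfl
        have hw0 : w 0 = 0 := by rw [hw]; simp
        have hu0 : ∑ k ∈ range (0+1), u k * u (0-k) = aZ 0 * aZ 0 := by
          simp [hu]
        have hv0 : v 0 = aZ 1 := by rw [hv, hc1]; simp
        rw [hq0, hw0, hu0, hv0]
        have he0 := euler_zeta 0
        simp [Finset.sum_range_one] at he0
        linear_combination -he0
    | succ m =>
        have hsum1 : ∑ k ∈ range (m+1), u k * v (m-k)
            = (∑ k ∈ range (m+1), (((m-k:ℕ):ℂ)+1) * (aZ k * aZ (m-k+1))) * z^m := by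
          rw [Finset.sum_mul]
          refine Finset.sum_congr rfl (fun k hk => ?_)
          simp only [mem_range] at hk
          rw [hu, hv, hc1]
          dsimp only
          rw [show (m-k)+1 = m-k+1 from rfl]
          have hzp : z^k * z^(m-k) = z^m := by
            rw [← pow_add]
            congr 1
            omega
          calc aZ k * z^k * ((((m-k:ℕ):ℂ)+1) * aZ (m-k+1) * z^(m-k))
              = (((m-k:ℕ):ℂ)+1) * (aZ k * aZ (m-k+1)) * (z^k * z^(m-k)) := by ring
            _ = (((m-k:ℕ):ℂ)+1) * (aZ k * aZ (m-k+1)) * z^m := by rw [hzp]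
        have hsum2 : ∑ k ∈ range (m+2), u k * u (m+1-k)
            = (∑ k ∈ range (m+2), aZ k * aZ (m+1-k)) * z^(m+1) := by
          rw [Finset.sum_mul]
          refine Finset.sum_congr rfl (fun k hk => ?_)
          simp only [mem_range] at hk
          rw [hu]
          dsimp only
          have hzp : z^k * z^(m+1-k) = z^(m+1) := by
            rw [← pow_add]
            congr 1
            omega
          calc aZ k * z^k * (aZ (m+1-k) * z^(m+1-k))
              = aZ k * aZ (m+1-k) * (z^k * z^(m+1-k)) := by ring
            _ = aZ k * aZ (m+1-k) * z^(m+1) := by rw [hzp]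
        have hqq : q (m+1) = 4*z*(∑ k ∈ range (m+1), u k * v (m-k)) := rfl
        rw [hqq, hsum1, hsum2, hw, hv, hc1]
        dsimp only
        have hk := key_coeff m
        push_cast
        have hzz : z * ((∑ k ∈ range (m+1), (((m-k:ℕ):ℂ)+1) * (aZ k * aZ (m-k+1))) * z^m)
            = (∑ k ∈ range (m+1), (((m-k:ℕ):ℂ)+1) * (aZ k * aZ (m-k+1))) * z^(m+1) := by
          rw [pow_succ]; ring
        push_cast at hk
        linear_combination (-(z^(m+1))) * hk
  rw [hzero] at Total
  have h0 : (2*z*pSum c2 z + 5*pSum c1 z) -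
      (4*z*(pSum aZ z * pSum c1 z) + 2*(pSum aZ z * pSum aZ z)) = 0 :=
    Total.unique hasSum_zero
  linear_combination h0
end

section
/- Suppose g is a formal power series over a field of characteristic zero with g(0) ≠ 0, and g satisfies a second-order linear differential equation p₂·g'' + p₁·g' + p₀·g = 0 with polynomial coefficients p₀, p₁, p₂ not all zero. Then f = 1/g satisfies the differential equation p₂·(2(f')² − f·f'') + (−p₁)·f·f' + p₀·f² = 0, which is polynomial of degree 2 in f and its derivatives with polynomial coefficients. -/
open PowerSeries Polynomial

theorem reciprocal_of_holonomic_is_delta2finite {K : Type*} [Field K] [CharZero K]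
    (g : K⟦X⟧) (hg : PowerSeries.constantCoeff g ≠ 0)
    (p₀ p₁ p₂ : K[X]) (hp : ¬(p₀ = 0 ∧ p₁ = 0 ∧ p₂ = 0))
    (hODE : (p₂ : K⟦X⟧) * d⁄dX K (d⁄dX K g) + (p₁ : K⟦X⟧) * d⁄dX K g +
      (p₀ : K⟦X⟧) * g = 0) :
    (p₂ : K⟦X⟧) * (2 * (d⁄dX K g⁻¹) ^ 2 - g⁻¹ * d⁄dX K (d⁄dX K g⁻¹)) -
      (p₁ : K⟦X⟧) * (g⁻¹ * d⁄dX K g⁻¹) + (p₀ : K⟦X⟧) * (g⁻¹) ^ 2 = 0 := by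
  have h1 : g * g⁻¹ = 1 := PowerSeries.mul_inv_cancel g hg
  have hf' : d⁄dX K g⁻¹ = -g⁻¹ ^ 2 * d⁄dX K g := PowerSeries.derivative_inv' g
  have hf'' : d⁄dX K (d⁄dX K g⁻¹) =
      -g⁻¹ ^ 2 * d⁄dX K (d⁄dX K g) + 2 * g⁻¹ ^ 3 * (d⁄dX K g) ^ 2 := by
    rw [hf']
    rw [Derivation.leibniz]
    simp only [smul_eq_mul, Derivation.map_neg, Derivation.leibniz, Derivation.leibniz_pow]
    rw [hf']
    ring_nf
  rw [hf'', hf']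
  linear_combination (g⁻¹ ^ 3) * hODE - ((p₀ : K⟦X⟧) * g⁻¹ ^ 2) * h1
end
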